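/- Let n ≥ 2, let e : Fin 2 → EuclideanSpace ℂ (Fin 2) be an orthonormal basis of ℂ², let S ⊆ Fin n be nonempty with S ≠ Fin n, and let ψ : (Fin n → Fin 2) → ℂ be the product state ψ x = ∏ i, (e (if i ∈ S then 0 else 1)) (x i) (i.e. every processor in S holds e 0 and every processor outside S holds e 1). Then ψ admits a symmetric move for S. (This is the step in the proof of Proposition 3 of the paper asserting that after a measurement following a symmetric move, the resulting state still allows a symmetric move for the same processors.) -/

import Mathlib

/-- Coefficient of `ψ` on the product basis vector `⊗ᵢ e (f i)`. -/
noncomputable def coeff {n : ℕ} (ψ : (Fin n → Fin 2) → ℂ)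
    (e : Fin 2 → EuclideanSpace ℂ (Fin 2)) (f : Fin n → Fin 2) : ℂ :=
  ∑ x : Fin n → Fin 2, (∏ i, star ((e (f i)) (x i))) * ψ x

/-- An `n`-qubit state `ψ` admits a symmetric move for a set `S` of processors. -/
noncomputable def SymMove {n : ℕ} (ψ : (Fin n → Fin 2) → ℂ) (S : Finset (Fin n)) : Prop :=
  ∀ e : OrthonormalBasis (Fin 2) ℂ (EuclideanSpace ℂ (Fin 2)),
    ∃ l : Fin 2, coeff ψ (fun j => e j) (fun i => if i ∈ S then l else 1 - l) ≠ 0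

local notation "⟪" x ", " y "⟫" => (inner x y : ℂ)

lemma perp_all_eq_zero (b : OrthonormalBasis (Fin 2) ℂ (EuclideanSpace ℂ (Fin 2)))
    (v : EuclideanSpace ℂ (Fin 2)) (h : ∀ j, (inner ℂ (b j) (v) : ℂ) = 0) : v = 0 := by
  have hv := b.sum_repr v
  rw [← hv]
  simp [b.repr_apply_apply, h]

lemma exists_good (e b : OrthonormalBasis (Fin 2) ℂ (EuclideanSpace ℂ (Fin 2))) :
    ∃ l : Fin 2, (inner ℂ (b l) (e 0) : ℂ) ≠ 0 ∧ (inner ℂ (b (1 - l)) (e 1) : ℂ) ≠ 0 := by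
  by_contra hc
  push_neg at hc
  have hb0 : ∀ i : Fin 2, b i ≠ 0 := fun i => b.orthonormal.ne_zero i
  have he0 : ∀ i : Fin 2, e i ≠ 0 := fun i => e.orthonormal.ne_zero i
  have hbv : ∀ i : Fin 2, (inner ℂ (b i) (e 0) : ℂ) = 0 → (inner ℂ (b i) (e 1) : ℂ) = 0 → False := by
    intro i h0 h1
    apply hb0 i
    have : ∀ j : Fin 2, (inner ℂ (e j) (b i) : ℂ) = 0 := by
      rw [Fin.forall_fin_two]
      constructor
      · rw [← inner_conj_symm, h0, map_zero]
      · rw [← inner_conj_symm, h1, map_zero]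
    exact perp_all_eq_zero e (b i) this
  have hev : ∀ j : Fin 2, (inner ℂ (b 0) (e j) : ℂ) = 0 → (inner ℂ (b 1) (e j) : ℂ) = 0 → False := by
    intro j h0 h1
    apply he0 j
    apply perp_all_eq_zero b
    rw [Fin.forall_fin_two]; exact ⟨h0, h1⟩
  by_cases h00 : (inner ℂ (b 0) (e 0) : ℂ) = 0
  · by_cases h01 : (inner ℂ (b 0) (e 1) : ℂ) = 0
    · exact hbv 0 h00 h01
    · have h10 : (inner ℂ (b 1) (e 0) : ℂ) = 0 := by
        by_contra h10
        exact h01 (hc 1 h10)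
      exact hev 0 h00 h10
  · have h11 : (inner ℂ (b 1) (e 1) : ℂ) = 0 := hc 0 h00
    by_cases h10 : (inner ℂ (b 1) (e 0) : ℂ) = 0
    · exact hbv 1 h10 h11
    · exact hev 1 (hc 1 h10) h11

theorem product_state_symMove {n : ℕ} (hn : 2 ≤ n)
    (e : OrthonormalBasis (Fin 2) ℂ (EuclideanSpace ℂ (Fin 2)))
    (S : Finset (Fin n)) (hS : S.Nonempty) (hS' : S ≠ Finset.univ)
    (ψ : (Fin n → Fin 2) → ℂ)
    (hψ : ∀ x, ψ x = ∏ i, (e (if i ∈ S then 0 else 1)) (x i)) :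
    SymMove ψ S := by
  intro b
  obtain ⟨l, h0, h1⟩ := exists_good e b
  refine ⟨l, ?_⟩
  have key : coeff ψ (fun j => b j) (fun i => if i ∈ S then l else 1 - l)
      = ∏ i : Fin n, (inner ℂ (b (if i ∈ S then l else 1 - l))
          (e (if i ∈ S then (0 : Fin 2) else 1)) : ℂ) := by
    unfold coeff
    simp_rw [hψ, ← Finset.prod_mul_distrib, PiLp.inner_apply, RCLike.inner_apply]
    rw [Finset.prod_univ_sum, Fintype.piFinset_univ]
    refine Finset.sum_congr rfl fun x _ => Finset.prod_congr rfl fun i _ => ?_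
    exact mul_comm _ _
  rw [key]
  refine Finset.prod_ne_zero_iff.mpr fun i _ => ?_
  by_cases hi : i ∈ S
  · simp only [hi, if_true]; exact h0
  · simp only [hi, if_false]; exact h1
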